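/- arXiv:1010.1842 — 6 statements merged into one kernel-verified Lean document; each statement's English description precedes it below -/
import Mathlib

section
/- With (a₁, a₂, a₃, a₄, a₅, a₆, a₇) = (16, −16, −8, −16, −4, −4, 2), one has π² = Σ_{n=0}^∞ (1/16ⁿ) · Σ_{r=1}^{7} aᵣ/(8n+r)². -/
/-!
With `γ = (1 + i) / 2`, Euler's reflection formula
`Li₂ z + Li₂ (1 - z) = π²/6 - log z log (1 - z)` at `z = γ` and at `z = 1/2` gives
`16 (Li₂ γ + Li₂ γ̄) - 8 Li₂ (1/2) = π²`, because
`log γ log γ̄ = |log γ|² = (log 2 / 2)² + (π / 4)²`.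
Expanding the dilogarithms, the coefficient of `1 / k²` in this combination is
`16 (γ ^ k + γ̄ ^ k) - 32 · 2 ^ (-k/2) [k even]`; it is divided by `16` when `k` increases by `8`
(as `γ⁸ = 1/16`) and equals `aₖ` for `k < 8`.

The reflection formula holds because its derivative vanishes on the convex lens
`‖z‖ < 1, ‖1 - z‖ < 1`, and its value there is the limit `π²/6 = Li₂ 1` at `z → 0⁺`.
-/

/-- The BBP-type coefficients `(a₁, …, a₇) = (16, −16, −8, −16, −4, −4, 2)`. -/
def a : ℕ → ℝ
  | 1 => 16
  | 2 => -16
  | 3 => -8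
  | 4 => -16
  | 5 => -4
  | 6 => -4
  | 7 => 2
  | _ => 0

open Complex Filter Metric Set Topology
open scoped Real

-- The `k = 0` term is `z ^ 0 / 0 = 0`.
noncomputable def dilog (z : ℂ) : ℂ := ∑' k : ℕ, z ^ k / (k : ℂ) ^ 2

lemma norm_pow_div_sq_le {z : ℂ} (hz : ‖z‖ ≤ 1) (k : ℕ) :
    ‖z ^ k / (k : ℂ) ^ 2‖ ≤ 1 / (k : ℝ) ^ 2 := by
  rw [norm_div, norm_pow, norm_pow, Complex.norm_natCast]
  gcongr
  exact pow_le_one₀ (norm_nonneg _) hz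

lemma hasSum_dilog {z : ℂ} (hz : ‖z‖ ≤ 1) :
    HasSum (fun k : ℕ => z ^ k / (k : ℂ) ^ 2) (dilog z) :=
  ((Real.summable_one_div_nat_pow.mpr one_lt_two).of_norm_bounded (norm_pow_div_sq_le hz)).hasSum

lemma continuousOn_dilog : ContinuousOn dilog (closedBall 0 1) :=
  (tendstoUniformlyOn_tsum (Real.summable_one_div_nat_pow.mpr one_lt_two) fun k z hz =>
    norm_pow_div_sq_le (by simpa using hz) k).continuousOn <|
    .of_forall fun s => continuousOn_finsetSum s fun _ _ => by fun_prop

lemma dilog_zero : dilog 0 = 0 := by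
  simp only [dilog, zero_pow_eq, ite_div, one_div]
  simp

lemma dilog_one : dilog 1 = π ^ 2 / 6 := by
  have := (hasSum_ofReal.mpr hasSum_zeta_two).tsum_eq
  push_cast at this
  simpa [dilog] using this

lemma hasSum_pow_sub_one_div {z : ℂ} (hz : ‖z‖ < 1) (h0 : z ≠ 0) :
    HasSum (fun k : ℕ => z ^ (k - 1) / k) (-log (1 - z) / z) := by
  refine ((hasSum_taylorSeries_neg_log hz).div_const z).congr_fun fun k => ?_
  rcases k with _ | k
  · simp
  · simp [pow_succ]; field_simp

lemma hasDerivAt_dilog {z : ℂ} (hz : ‖z‖ < 1) (h0 : z ≠ 0) :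
    HasDerivAt dilog (-log (1 - z) / z) z := by
  obtain ⟨r, hzr, hr⟩ := exists_between hz
  have hr0 : 0 < r := (norm_nonneg z).trans_lt hzr
  rw [← (hasSum_pow_sub_one_div hz h0).tsum_eq]
  refine hasDerivAt_tsum_of_isPreconnected (u := fun k : ℕ => r ^ (k - 1))
    (g := fun (k : ℕ) (w : ℂ) => w ^ k / (k : ℂ) ^ 2)
    (g' := fun (k : ℕ) (w : ℂ) => w ^ (k - 1) / k)
    ?_ isOpen_ball (convex_ball 0 r).isPreconnected (fun k w _ => ?_) (fun k w hw => ?_)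
    (mem_ball_self hr0) (hasSum_dilog (by simp)).summable (by simpa using hzr)
  · exact (summable_nat_add_iff 1).mp (by simpa using summable_geometric_of_lt_one hr0.le hr)
  · refine ((hasDerivAt_pow k w).div_const ((k : ℂ) ^ 2)).congr_deriv ?_
    rcases k with _ | k
    · simp
    · field_simp
  · rw [mem_ball_zero_iff] at hw
    rw [norm_div, norm_pow, Complex.norm_natCast]
    rcases k with _ | k
    · simp
    · calc ‖w‖ ^ (k + 1 - 1) / (k + 1 : ℕ) ≤ ‖w‖ ^ (k + 1 - 1) / 1 := by
            gcongr; exact_mod_cast Nat.succ_pos k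
        _ ≤ r ^ (k + 1 - 1) := by rw [div_one]; gcongr

lemma Real.tendsto_log_mul_log_one_sub :
    Tendsto (fun t : ℝ => Real.log t * Real.log (1 - t)) (𝓝 0) (𝓝 0) := by
  have hO : (fun t : ℝ => Real.log (1 - t)) =O[𝓝 0] fun t => t := by
    have hd : HasDerivAt (fun t : ℝ => Real.log (1 - t)) (-1) 0 := by
      simpa using ((hasDerivAt_id (0 : ℝ)).const_sub 1).log (by norm_num)
    simpa using hd.isBigO_sub
  refine ((Asymptotics.isBigO_refl Real.log _).mul hO).trans_tendsto ?_
  simpa [mul_comm] using Real.continuous_mul_log.tendsto 0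

lemma Filter.Tendsto.dilog {α : Type*} {l : Filter α} {f : α → ℂ} {z : ℂ} (hz : ‖z‖ ≤ 1)
    (hf : Tendsto f l (𝓝 z)) (hf1 : ∀ᶠ x in l, ‖f x‖ ≤ 1) :
    Tendsto (fun x => dilog (f x)) l (𝓝 (dilog z)) :=
  (continuousOn_dilog z (by simpa using hz)).tendsto.comp
    (tendsto_nhdsWithin_iff.mpr ⟨hf, by simpa using hf1⟩)

lemma hasDerivAt_dilog_add_dilog_one_sub {z : ℂ} (hz : ‖z‖ < 1) (hz' : ‖1 - z‖ < 1) :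
    HasDerivAt (fun w => dilog w + dilog (1 - w) + log w * log (1 - w)) 0 z := by
  have hz_slit : z ∈ slitPlane := by
    simpa using mem_slitPlane_of_norm_lt_one (z := z - 1) (by rwa [norm_sub_rev])
  have hz'_slit : 1 - z ∈ slitPlane := by
    simpa [sub_eq_add_neg] using mem_slitPlane_of_norm_lt_one (z := -z) (by rwa [norm_neg])
  have hz0 := slitPlane_ne_zero hz_slit
  have hz'0 := slitPlane_ne_zero hz'_slit
  have h1 : HasDerivAt (fun w => 1 - w) (-1) z := (hasDerivAt_id z).const_sub 1
  have h2 : HasDerivAt (fun w => dilog (1 - w)) (-log (1 - (1 - z)) / (1 - z) * -1) z :=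
    (hasDerivAt_dilog hz' hz'0).comp z h1
  have h3 : HasDerivAt (fun w => log w * log (1 - w))
      (z⁻¹ * log (1 - z) + log z * ((1 - z)⁻¹ * -1)) z :=
    (hasDerivAt_log hz_slit).fun_mul ((hasDerivAt_log hz'_slit).comp z h1)
  refine (((hasDerivAt_dilog hz hz0).fun_add h2).fun_add h3).congr_deriv ?_
  rw [sub_sub_cancel]
  field_simp
  ring

theorem dilog_add_dilog_one_sub {z : ℂ} (hz : ‖z‖ < 1) (hz' : ‖1 - z‖ < 1) :
    dilog z + dilog (1 - z) = π ^ 2 / 6 - log z * log (1 - z) := by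
  set F : ℂ → ℂ := fun w => dilog w + dilog (1 - w) + log w * log (1 - w)
  set U : Set ℂ := ball 0 1 ∩ ball 1 1
  have hmemU {w : ℂ} : w ∈ U ↔ ‖w‖ < 1 ∧ ‖1 - w‖ < 1 := by
    simp [U, dist_eq_norm, norm_sub_rev]
  have hderiv : ∀ w ∈ U, HasDerivAt F 0 w := fun w hw =>
    hasDerivAt_dilog_add_dilog_one_sub (hmemU.mp hw).1 (hmemU.mp hw).2
  have hconst : ∀ w ∈ U, F w = F z := fun w hw =>
    (isOpen_ball.inter isOpen_ball).is_const_of_deriv_eq_zero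
      ((convex_ball _ _).inter (convex_ball _ _)).isPreconnected
      (fun w hw => (hderiv w hw).differentiableAt.differentiableWithinAt)
      (fun w hw => (hderiv w hw).deriv) hw (hmemU.mpr ⟨hz, hz'⟩)
  have hIoo : ∀ᶠ t : ℝ in 𝓝[>] 0, t ∈ Ioo 0 1 := Ioo_mem_nhdsGT one_pos
  have hUoo : ∀ t ∈ Ioo (0 : ℝ) 1, (t : ℂ) ∈ U := fun t ht => by
    rw [hmemU, ← ofReal_one, ← ofReal_sub, norm_real, norm_real,
      Real.norm_of_nonneg ht.1.le, Real.norm_of_nonneg (sub_pos.mpr ht.2).le]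
    constructor <;> linarith [ht.1, ht.2]
  have hlim : Tendsto (fun t : ℝ => F t) (𝓝[>] 0) (𝓝 (π ^ 2 / 6)) := by
    have hofReal : Tendsto (fun t : ℝ => (t : ℂ)) (𝓝[>] 0) (𝓝 0) :=
      (continuous_ofReal.tendsto' 0 0 ofReal_zero).mono_left nhdsWithin_le_nhds
    have h1 : Tendsto (fun t : ℝ => dilog t) (𝓝[>] 0) (𝓝 0) := by
      simpa [dilog_zero] using hofReal.dilog (by simp) <| hIoo.mono fun t ht =>
        ((hmemU.mp (hUoo t ht)).1).le
    have h2 : Tendsto (fun t : ℝ => dilog (1 - t)) (𝓝[>] 0) (𝓝 (π ^ 2 / 6)) := by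
      simpa [dilog_one] using (hofReal.const_sub 1).dilog (by simp) <| hIoo.mono fun t ht =>
        ((hmemU.mp (hUoo t ht)).2).le
    have h3 : Tendsto (fun t : ℝ => log t * log (1 - t)) (𝓝[>] 0) (𝓝 0) := by
      refine Tendsto.congr' (hIoo.mono fun t ht => ?_) <|
        (continuous_ofReal.tendsto' 0 0 ofReal_zero).comp <|
          Real.tendsto_log_mul_log_one_sub.mono_left nhdsWithin_le_nhds
      simp [ofReal_log ht.1.le, ofReal_log (sub_pos.mpr ht.2).le]
    simpa using (h1.add h2).add h3
  have hF : F z = π ^ 2 / 6 := tendsto_nhds_unique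
    (tendsto_const_nhds.congr' <| hIoo.mono fun t ht => (hconst t (hUoo t ht)).symm) hlim
  linear_combination hF

lemma dilog_one_half : dilog (1 / 2) = π ^ 2 / 12 - Real.log 2 ^ 2 / 2 := by
  have h := dilog_add_dilog_one_sub (z := 1 / 2) (by norm_num) (by norm_num)
  have hlog : log (1 / 2) = -Real.log 2 := by
    rw [show (1 / 2 : ℂ) = ((2⁻¹ : ℝ) : ℂ) by push_cast; ring, ← ofReal_log (by norm_num),
      Real.log_inv, ofReal_neg]
  rw [show (1 : ℂ) - 1 / 2 = 1 / 2 by norm_num, hlog] at h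
  linear_combination h / 2

lemma arg_one_add_I_div_two : arg ((1 + I) / 2) = π / 4 := by
  have hsqrt : ((√2 : ℝ) : ℂ) ^ 2 = 2 := by norm_cast; exact Real.sq_sqrt zero_le_two
  have hpolar : (1 + I) / 2 = ((√2 / 2 : ℝ) : ℂ) * (cos (π / 4 : ℝ) + sin (π / 4 : ℝ) * I) := by
    rw [← ofReal_cos, ← ofReal_sin, Real.cos_pi_div_four, Real.sin_pi_div_four]
    push_cast
    linear_combination (-(1 + I) / 4) * hsqrt
  rw [hpolar, arg_mul_cos_add_sin_mul_I (by positivity)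
    ⟨by linarith [Real.pi_pos], by linarith [Real.pi_pos]⟩]

lemma norm_one_add_I_div_two : ‖(1 + I) / 2‖ = √(2⁻¹) := by
  rw [norm_def, normSq_apply]
  norm_num

lemma norm_one_add_I_div_two_lt_one : ‖(1 + I) / 2‖ < 1 := by
  rw [norm_one_add_I_div_two, Real.sqrt_lt' one_pos]
  norm_num

lemma log_one_add_I_div_two :
    log ((1 + I) / 2) = ((-(Real.log 2 / 2) : ℝ) : ℂ) + ((π / 4 : ℝ) : ℂ) * I := by
  apply Complex.ext
  · rw [log_re, norm_one_add_I_div_two, Real.log_sqrt (by norm_num), Real.log_inv]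
    simp only [add_re, ofReal_re, mul_re, ofReal_im, I_re, I_im]
    ring
  · simp [log_im, arg_one_add_I_div_two]

lemma conj_one_add_I_div_two : (starRingEnd ℂ) ((1 + I) / 2) = (1 - I) / 2 := by
  rw [map_div₀, map_add, map_one, conj_I, map_ofNat, sub_eq_add_neg]

lemma log_one_sub_I_div_two :
    log ((1 - I) / 2) = ((-(Real.log 2 / 2) : ℝ) : ℂ) - ((π / 4 : ℝ) : ℂ) * I := by
  have harg : arg ((1 + I) / 2) ≠ π := by rw [arg_one_add_I_div_two]; linarith [Real.pi_pos]
  rw [← conj_one_add_I_div_two, log_conj _ harg, log_one_add_I_div_two, map_add, map_mul,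
    conj_ofReal, conj_ofReal, conj_I]
  ring

lemma dilog_one_add_I_div_two_add_dilog_one_sub_I_div_two :
    dilog ((1 + I) / 2) + dilog ((1 - I) / 2) = 5 * π ^ 2 / 48 - Real.log 2 ^ 2 / 4 := by
  have hsub : 1 - (1 + I) / 2 = (1 - I) / 2 := by ring
  have h := dilog_add_dilog_one_sub norm_one_add_I_div_two_lt_one
    (by rw [hsub, ← conj_one_add_I_div_two, norm_conj]; exact norm_one_add_I_div_two_lt_one)
  rw [hsub, log_one_add_I_div_two, log_one_sub_I_div_two] at h
  push_cast at h
  linear_combination h + (π ^ 2 / 16) * I_sq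

lemma hasSum_dilog_even {z : ℂ} (hz : ‖z‖ ≤ 1) :
    HasSum (fun k : ℕ => (if Even k then 4 * z ^ (k / 2) else 0) / (k : ℂ) ^ 2) (dilog z) := by
  rw [← add_zero (dilog z)]
  refine HasSum.even_add_odd ((hasSum_dilog hz).congr_fun fun m => ?_)
    (hasSum_zero.congr_fun fun m => ?_)
  · rw [if_pos (even_two_mul m), Nat.mul_div_cancel_left m two_pos]
    push_cast
    rcases eq_or_ne (m : ℂ) 0 with hm | hm
    · simp [hm]
    · field_simp
      ring
  · simp

lemma HasSum.sum_range_mul_add {α : Type*} [AddCommMonoid α] [TopologicalSpace α]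
    [ContinuousAdd α] [RegularSpace α] {f : ℕ → α} {s : α} (hf : HasSum f s) (m : ℕ) [NeZero m] :
    HasSum (fun n => ∑ j ∈ Finset.range m, f (m * n + j)) s := by
  refine ((Nat.divModEquiv m).symm.hasSum_iff.mpr hf).prod_fiberwise fun n => ?_
  simpa [Finset.sum_range, mul_comm] using hasSum_fintype _

noncomputable def bbpCoeff (k : ℕ) : ℂ :=
  16 * (((1 + I) / 2) ^ k + ((1 - I) / 2) ^ k) - 8 * if Even k then 4 * (1 / 2) ^ (k / 2) else 0

lemma hasSum_bbpCoeff_div_sq : HasSum (fun k : ℕ => bbpCoeff k / (k : ℂ) ^ 2) (π ^ 2) := by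
  have hδ : ‖(1 - I) / 2‖ ≤ 1 := by
    rw [← conj_one_add_I_div_two, norm_conj]; exact norm_one_add_I_div_two_lt_one.le
  have hγ := hasSum_dilog norm_one_add_I_div_two_lt_one.le
  have h := ((hγ.add (hasSum_dilog hδ)).mul_left 16).sub
    ((hasSum_dilog_even (z := 1 / 2) (by norm_num)).mul_left 8)
  rw [dilog_one_add_I_div_two_add_dilog_one_sub_I_div_two, dilog_one_half,
    show ∀ x y : ℂ, 16 * (5 * x / 48 - y / 4) - 8 * (x / 12 - y / 2) = x by intros; ring] at h
  exact h.congr_fun fun k => by simp only [bbpCoeff]; ring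

lemma one_add_I_div_two_pow_eight : ((1 + I) / 2) ^ 8 = 1 / 16 := by
  simp [pow_succ, Complex.ext_iff]; norm_num

lemma one_sub_I_div_two_pow_eight : ((1 - I) / 2) ^ 8 = 1 / 16 := by
  simp [pow_succ, Complex.ext_iff]; norm_num

lemma bbpCoeff_add_eight (k : ℕ) : bbpCoeff (k + 8) = bbpCoeff k / 16 := by
  have hdiv : (k + 8) / 2 = k / 2 + 4 := by omega
  simp only [bbpCoeff, pow_add, one_add_I_div_two_pow_eight, one_sub_I_div_two_pow_eight, hdiv,
    Nat.even_add, show Even 8 by decide, iff_true]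
  split_ifs <;> ring

lemma bbpCoeff_of_lt {r : ℕ} (hr : r < 8) : bbpCoeff r = a r := by
  interval_cases r <;> simp [bbpCoeff, a, pow_succ, Complex.ext_iff] <;> norm_num

lemma bbpCoeff_eight_mul_add (n : ℕ) {r : ℕ} (hr : r < 8) :
    bbpCoeff (8 * n + r) = a r / 16 ^ n := by
  induction n with
  | zero => simp [bbpCoeff_of_lt hr]
  | succ n ih =>
    rw [show 8 * (n + 1) + r = 8 * n + r + 8 by ring, bbpCoeff_add_eight, ih, pow_succ, div_div]

/-- `π² = Σ_{n=0}^∞ (1/16ⁿ) · Σ_{r=1}^{7} aᵣ/(8n+r)²`. -/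
theorem stmt_1 :
    HasSum (fun n : ℕ =>
      (1 / 16 ^ n : ℝ) * ∑ r ∈ Finset.Icc 1 7, a r / (8 * (n : ℝ) + r) ^ 2)
      (Real.pi ^ 2) := by
  rw [← hasSum_ofReal, ofReal_pow]
  refine (hasSum_bbpCoeff_div_sq.sum_range_mul_add 8).congr_fun fun n => ?_
  rw [Finset.range_eq_Ico, Finset.sum_eq_sum_Ico_succ_bot (by norm_num),
    bbpCoeff_eight_mul_add n (by norm_num), show a 0 = 0 from rfl, Finset.mul_sum]
  push_cast
  rw [zero_div, zero_div, zero_add]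
  refine Finset.sum_congr rfl fun r hr => ?_
  rw [bbpCoeff_eight_mul_add n (by simp at hr; omega)]
  ring
end

section
/- For integers n ≥ 1 and k ≥ 2, one has log k − (H_{kn} − H_n) = ∫₀¹ (Q_k′(t)/Q_k(t)) · t^{nk} dt, where Q_k(t) = 1 + t + ⋯ + t^{k−1}. -/
/-!
Since `(1 - t) Q_k(t) = 1 - t^k`, one has `Q_k(t) Q_n(t^k) = Q_{kn}(t)`, and differentiating gives
`(1 - t) Q_k'(t) = Q_k(t) - k t^{k-1}`. Together these turn the integrand into
`Q_k'/Q_k - (Q_{kn}(t) - k t^{k-1} Q_n(t^k))` on `[0, 1]`. The three pieces integrate to `log k`,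
to `H_{kn}` (termwise), and to `H_n` (substituting `u = t^k`).
-/

open intervalIntegral

/-- The `n`-th harmonic number `Hₙ = Σ_{j=1}^n 1/j`. -/
noncomputable def H (n : ℕ) : ℝ := ∑ j ∈ Finset.range n, 1 / ((j : ℝ) + 1)

/-- The polynomial `Q_k(t) = 1 + t + ⋯ + t^{k−1}`. -/
noncomputable def Q (k : ℕ) : ℝ → ℝ := fun t => ∑ i ∈ Finset.range k, t ^ i

open Finset Set

theorem integral_deriv_div_self_eq_log_sub_log {f : ℝ → ℝ} {a b : ℝ} (hf : ContDiff ℝ 1 f)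
    (hf₀ : ∀ x ∈ uIcc a b, f x ≠ 0) :
    ∫ x in a..b, deriv f x / f x = Real.log (f b) - Real.log (f a) := by
  have hd : Differentiable ℝ f := hf.differentiable one_ne_zero
  refine integral_eq_sub_of_hasDerivAt (fun x hx => (hd x).hasDerivAt.log (hf₀ x hx)) ?_
  exact ((hf.continuous_deriv le_rfl).continuousOn.div hf.continuous.continuousOn
    hf₀).intervalIntegrable

theorem contDiff_Q (k : ℕ) : ContDiff ℝ 1 (Q k) := by
  unfold Q; fun_prop

theorem Q_apply_zero {k : ℕ} (hk : k ≠ 0) : Q k 0 = 1 := by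
  simp [Q, zero_pow_eq, hk]

theorem Q_apply_one (k : ℕ) : Q k 1 = k := by
  simp [Q]

theorem Q_pos {k : ℕ} (hk : k ≠ 0) {t : ℝ} (ht : 0 ≤ t) : 0 < Q k t :=
  sum_pos' (fun i _ => pow_nonneg ht i) ⟨0, mem_range.2 (Nat.pos_of_ne_zero hk), by simp⟩

theorem one_sub_mul_Q (k : ℕ) (t : ℝ) : (1 - t) * Q k t = 1 - t ^ k :=
  mul_neg_geom_sum t k

theorem one_sub_mul_deriv_Q (k : ℕ) (t : ℝ) :
    (1 - t) * deriv (Q k) t = Q k t - k * t ^ (k - 1) := by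
  have hQ : DifferentiableAt ℝ (Q k) t := (contDiff_Q k).differentiable one_ne_zero t
  have h := congrArg (deriv · t) (funext (one_sub_mul_Q k))
  rw [deriv_fun_mul (by fun_prop) hQ] at h
  simp only [deriv_const_sub_id', neg_mul, one_mul, differentiableAt_const, differentiableAt_fun_id,
    DifferentiableAt.fun_pow, deriv_fun_sub, deriv_const', deriv_fun_pow, deriv_id'', mul_one,
    zero_sub] at h
  linarith

theorem Q_mul_Q_pow (k n : ℕ) (t : ℝ) : Q k t * Q n (t ^ k) = Q (k * n) t := by
  induction n with
  | zero => simp [Q]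
  | succ n ih =>
    simp only [Q] at ih ⊢
    rw [sum_range_succ, Nat.mul_succ, sum_range_add, ← ih, mul_add, ← pow_mul]
    congr 1
    rw [sum_mul]
    exact sum_congr rfl fun i _ => by rw [pow_add, mul_comm]

theorem integral_Q_eq_H (N : ℕ) : ∫ t in (0:ℝ)..1, Q N t = H N := by
  simp [Q, H, integral_finsetSum]

theorem integral_Q_comp_pow_mul {k : ℕ} (hk : k ≠ 0) (n : ℕ) :
    ∫ t in (0:ℝ)..1, Q n (t ^ k) * (k * t ^ (k - 1)) = H n := by
  have := integral_comp_mul_deriv (a := 0) (b := 1) (f := fun t : ℝ => t ^ k) (g := Q n)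
    (fun t _ => hasDerivAt_pow k t) (by fun_prop) (contDiff_Q n).continuous
  simpa [hk, integral_Q_eq_H] using this

theorem deriv_Q_div_Q_mul_pow {k : ℕ} (n : ℕ) {t : ℝ} (ht : Q k t ≠ 0) :
    deriv (Q k) t / Q k t * t ^ (n * k) =
      deriv (Q k) t / Q k t - (Q (k * n) t - Q n (t ^ k) * (k * t ^ (k - 1))) := by
  have h1 := one_sub_mul_Q (k * n) t
  have h2 := Q_mul_Q_pow k n t
  have h3 := one_sub_mul_deriv_Q k t
  rw [mul_comm n k]
  field_simp
  linear_combination deriv (Q k) t * h1 - Q (k * n) t * h3 - k * t ^ (k - 1) * h2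

theorem stmt_4_general (n k : ℕ) (hk : 2 ≤ k) :
    Real.log k - (H (k * n) - H n) =
      ∫ t in (0:ℝ)..1, (deriv (Q k) t / Q k t) * t ^ (n * k) := by
  have hk₀ : k ≠ 0 := by omega
  have hQ : ∀ t ∈ uIcc (0 : ℝ) 1, Q k t ≠ 0 := fun t ht =>
    (Q_pos hk₀ (by rw [Set.uIcc_of_le zero_le_one] at ht; exact ht.1)).ne'
  have hcont : ∀ N, Continuous (Q N) := fun N => (contDiff_Q N).continuous
  have hint_log : IntervalIntegrable (fun t => deriv (Q k) t / Q k t) MeasureTheory.volume 0 1 :=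
    (((contDiff_Q k).continuous_deriv le_rfl).continuousOn.div
      (hcont k).continuousOn hQ).intervalIntegrable
  have hint_sub : IntervalIntegrable (fun t : ℝ => Q n (t ^ k) * (k * t ^ (k - 1)))
      MeasureTheory.volume 0 1 := by
    have := hcont n
    exact Continuous.intervalIntegrable (by fun_prop) _ _
  have hlog := integral_deriv_div_self_eq_log_sub_log (contDiff_Q k) hQ
  rw [Q_apply_one, Q_apply_zero hk₀, Real.log_one, sub_zero] at hlog
  rw [integral_congr fun t ht => deriv_Q_div_Q_mul_pow n (hQ t ht),
    integral_sub hint_log (((hcont _).intervalIntegrable _ _).sub hint_sub),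
    integral_sub ((hcont _).intervalIntegrable _ _) hint_sub,
    hlog, integral_Q_eq_H, integral_Q_comp_pow_mul hk₀]

/-- For `n ≥ 1`, `k ≥ 2`,
`log k − (H_{kn} − H_n) = ∫₀¹ (Q_k′(t)/Q_k(t)) · t^{nk} dt`. -/
theorem stmt_4 (n k : ℕ) (hn : 1 ≤ n) (hk : 2 ≤ k) :
    Real.log k - (H (k * n) - H n) =
      ∫ t in (0:ℝ)..1, (deriv (Q k) t / Q k t) * t ^ (n * k) :=
  stmt_4_general n k hk
end

section
/- For every integer k ≥ 2, one has ∫₀¹ Q_k(t)/(1+t^k) dt = (log 2)/k − (π/(2k²))·Σ_{j=0}^{k−1} (2j+1−k)·cot((2j+1)π/(2k)), where Q_k(t) = 1 + t + ⋯ + t^{k−1}. -/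
open intervalIntegral

/-!
With `ζⱼ = exp (i θⱼ)`, `θⱼ = (2j+1)π/k`, one has `z^k + 1 = ∏ⱼ (z - ζⱼ)`, so
`Q_k(t)/(1+t^k) = (1-t^k)/((1-t)(1+t^k)) = ∑ⱼ cⱼ/(t - ζⱼ)` with `cⱼ = -2ζⱼ/(k(1-ζⱼ))`, and the
segment `[0,1]` avoids the branch cut of `log (· - ζⱼ)`. Hence the integral is
`∑ⱼ cⱼ (log (1 - ζⱼ) - log (-ζⱼ))`. Now `cⱼ = (1 - i cot (θⱼ/2))/k`, the moduli give
`∑ⱼ log |1 - ζⱼ| = log |∏ⱼ (1 - ζⱼ)| = log 2`, and the arguments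
`arg (1 - ζⱼ) = θⱼ/2 - π/2`, `arg (-ζⱼ) = θⱼ - π` give the cotangent sum.
-/

open Complex Finset
open scoped Real

noncomputable def negOneRootAngle (k j : ℕ) : ℝ := (2 * j + 1) * π / k

noncomputable def negOneRoot (k j : ℕ) : ℂ := exp (negOneRootAngle k j * I)

lemma negOneRootAngle_mem_Ioo {k j : ℕ} (hj : j < k) :
    negOneRootAngle k j ∈ Set.Ioo 0 (2 * π) := by
  have hk : (0 : ℝ) < k := by exact_mod_cast j.zero_le.trans_lt hj
  have hjk : (2 * j + 1 : ℝ) < 2 * k := by exact_mod_cast (by omega : 2 * j + 1 < 2 * k)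
  refine ⟨by unfold negOneRootAngle; positivity, ?_⟩
  rw [negOneRootAngle, div_lt_iff₀ hk]
  nlinarith [Real.pi_pos]

lemma prod_sub_negOneRoot {k : ℕ} (hk : k ≠ 0) (z : ℂ) :
    ∏ j ∈ range k, (z - negOneRoot k j) = z ^ k + 1 := by
  have hη : exp (↑(π / k) * I) ^ k = -1 := by
    rw [← exp_nat_mul, ← exp_pi_mul_I]
    congr 1
    push_cast
    field_simp
  have h := congrArg (Polynomial.eval z)
    (X_pow_sub_C_eq_prod (isPrimitiveRoot_exp k hk) (Nat.pos_of_ne_zero hk) hη)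
  simp only [Polynomial.eval_sub, Polynomial.eval_pow, Polynomial.eval_X, Polynomial.eval_C,
    Polynomial.eval_prod, sub_neg_eq_add] at h
  rw [h]
  refine prod_congr rfl fun j _ => ?_
  rw [negOneRoot, negOneRootAngle, ← exp_nat_mul, ← exp_add]
  congr 2
  push_cast
  ring

lemma sub_negOneRoot_ne_zero {k j : ℕ} (hj : j ∈ range k) {z : ℂ} (hz : z ^ k + 1 ≠ 0) :
    z - negOneRoot k j ≠ 0 := fun h =>
  hz (by rw [← prod_sub_negOneRoot (ne_zero_of_lt (mem_range.1 hj)), prod_eq_zero hj h])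

lemma sum_inv_sub_negOneRoot {k : ℕ} (hk : k ≠ 0) {z : ℂ} (hz : z ^ k + 1 ≠ 0) :
    ∑ j ∈ range k, (z - negOneRoot k j)⁻¹ = k * z ^ (k - 1) / (z ^ k + 1) := by
  have h := logDeriv_prod (f := fun j w => w - negOneRoot k j)
    (fun j hj => sub_negOneRoot_ne_zero hj hz) (fun _ _ => by fun_prop)
  simp_rw [prod_sub_negOneRoot hk] at h
  simpa [logDeriv_apply] using h.symm

lemma sum_negOneRoot_div_sub {k : ℕ} (hk : k ≠ 0) {z : ℂ} (hz : z ^ k + 1 ≠ 0) :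
    ∑ j ∈ range k, negOneRoot k j / (z - negOneRoot k j) = -k / (z ^ k + 1) := by
  have h : ∀ j ∈ range k,
      negOneRoot k j / (z - negOneRoot k j) = z * (z - negOneRoot k j)⁻¹ - 1 := by
    intro j hj
    field_simp [sub_negOneRoot_ne_zero hj hz]
    ring
  rw [sum_congr rfl h, sum_sub_distrib, ← mul_sum, sum_inv_sub_negOneRoot hk hz, sum_const,
    card_range, nsmul_one, ← mul_div_assoc, mul_left_comm, mul_pow_sub_one hk]
  field_simp
  ring

-- The residue of `Q_k(z)/(1+z^k) = (1-z^k)/((1-z)(1+z^k))` at `ζⱼ`, using `ζⱼ^k = -1`.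
noncomputable def partialFractionCoeff (k j : ℕ) : ℂ :=
  -2 * negOneRoot k j / (k * (1 - negOneRoot k j))

lemma sum_partialFractionCoeff_div_sub {k : ℕ} (hk : k ≠ 0) {z : ℂ} (hz₁ : z ≠ 1)
    (hz : z ^ k + 1 ≠ 0) :
    ∑ j ∈ range k, partialFractionCoeff k j / (z - negOneRoot k j) =
      (∑ i ∈ range k, z ^ i) / (1 + z ^ k) := by
  have hone : (1 : ℂ) ^ k + 1 ≠ 0 := by norm_num
  have hsplit : ∀ j ∈ range k, partialFractionCoeff k j / (z - negOneRoot k j) =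
      -2 / (k * (1 - z)) * (negOneRoot k j / (z - negOneRoot k j) -
        negOneRoot k j / (1 - negOneRoot k j)) := by
    intro j hj
    have := sub_negOneRoot_ne_zero hj hz
    have := sub_negOneRoot_ne_zero hj hone
    have := sub_ne_zero.2 hz₁.symm
    rw [partialFractionCoeff]
    field_simp
    ring
  rw [sum_congr rfl hsplit, ← mul_sum, sum_sub_distrib, sum_negOneRoot_div_sub hk hz,
    sum_negOneRoot_div_sub hk hone, geom_sum_eq hz₁]
  have := sub_ne_zero.2 hz₁.symm
  have : (1 : ℂ) + z ^ k ≠ 0 := by rwa [add_comm]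
  field_simp
  ring

lemma intervalIntegrable_inv_ofReal_sub {a : ℂ} {u v : ℝ}
    (h : ∀ t ∈ Set.uIcc u v, (t : ℂ) - a ≠ 0) :
    IntervalIntegrable (fun t : ℝ => ((t : ℂ) - a)⁻¹) MeasureTheory.volume u v :=
  (ContinuousOn.inv₀ (by fun_prop) h).intervalIntegrable

lemma integral_inv_ofReal_sub {a : ℂ} {u v : ℝ}
    (h : ∀ t ∈ Set.uIcc u v, (t : ℂ) - a ∈ slitPlane) :
    ∫ t in u..v, ((t : ℂ) - a)⁻¹ = log (v - a) - log (u - a) := by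
  refine integral_eq_sub_of_hasDerivAt (f := fun t : ℝ => log ((t : ℂ) - a)) (fun t ht => ?_) ?_
  · simpa using ((hasDerivAt_id t).ofReal_comp.sub_const a).clog_real (h t ht)
  · exact intervalIntegrable_inv_ofReal_sub fun t ht => slitPlane_ne_zero (h t ht)

lemma ofReal_sub_mem_slitPlane {a : ℂ} (ha : -a ∈ slitPlane) {t : ℝ} (ht : 0 ≤ t) :
    (t : ℂ) - a ∈ slitPlane := by
  rw [mem_slitPlane_iff, neg_re, neg_im, neg_ne_zero] at ha
  rw [mem_slitPlane_iff, sub_re, sub_im, ofReal_re, ofReal_im, zero_sub, neg_ne_zero]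
  exact ha.imp (fun h => by linarith) id

lemma arg_exp_mul_I_of_mem_Ioc {θ : ℝ} (hθ : θ ∈ Set.Ioc (-π) π) : arg (exp (θ * I)) = θ := by
  rw [arg_exp_mul_I, toIocMod_eq_self]
  rwa [show -π + 2 * π = π by ring]

lemma neg_negOneRoot (k j : ℕ) : -negOneRoot k j = exp (↑(negOneRootAngle k j - π) * I) := by
  rw [negOneRoot, ofReal_sub, sub_mul, exp_sub, exp_pi_mul_I, div_neg, div_one]

lemma arg_neg_negOneRoot {k j : ℕ} (hj : j < k) :
    arg (-negOneRoot k j) = negOneRootAngle k j - π := by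
  obtain ⟨h0, h2π⟩ := negOneRootAngle_mem_Ioo hj
  rw [neg_negOneRoot, arg_exp_mul_I_of_mem_Ioc ⟨by linarith, by linarith⟩]

lemma neg_negOneRoot_mem_slitPlane {k j : ℕ} (hj : j < k) : -negOneRoot k j ∈ slitPlane := by
  obtain ⟨_, h2π⟩ := negOneRootAngle_mem_Ioo hj
  refine mem_slitPlane_iff_arg.2 ⟨?_, neg_ne_zero.2 (exp_ne_zero _)⟩
  rw [arg_neg_negOneRoot hj]
  linarith

lemma one_sub_exp_mul_I (θ : ℝ) :
    1 - exp (θ * I) = ↑(2 * Real.sin (θ / 2)) * exp (↑(θ / 2 - π / 2) * I) := by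
  obtain ⟨φ, rfl⟩ : ∃ φ, θ = 2 * φ := ⟨θ / 2, by ring⟩
  rw [mul_div_cancel_left₀ φ two_ne_zero, exp_mul_I, exp_mul_I, ← ofReal_cos, ← ofReal_sin,
    ← ofReal_cos, ← ofReal_sin, Real.cos_sub_pi_div_two, Real.sin_sub_pi_div_two,
    Real.cos_two_mul, Real.sin_two_mul]
  push_cast
  linear_combination (-2 : ℂ) * sin_sq_add_cos_sq (φ : ℂ)

lemma arg_one_sub_negOneRoot {k j : ℕ} (hj : j < k) :
    arg (1 - negOneRoot k j) = negOneRootAngle k j / 2 - π / 2 := by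
  obtain ⟨h0, h2π⟩ := negOneRootAngle_mem_Ioo hj
  have hsin : 0 < 2 * Real.sin (negOneRootAngle k j / 2) :=
    mul_pos two_pos (Real.sin_pos_of_pos_of_lt_pi (by linarith) (by linarith))
  rw [negOneRoot, one_sub_exp_mul_I, arg_real_mul _ hsin,
    arg_exp_mul_I_of_mem_Ioc ⟨by linarith, by linarith⟩]

lemma neg_two_mul_exp_div_one_sub_exp {θ : ℝ} (hθ : Real.sin (θ / 2) ≠ 0) :
    -2 * exp (θ * I) / (1 - exp (θ * I)) = 1 - Real.cot (θ / 2) * I := by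
  obtain ⟨φ, rfl⟩ : ∃ φ, θ = 2 * φ := ⟨θ / 2, by ring⟩
  rw [one_sub_exp_mul_I, mul_div_cancel_left₀ φ two_ne_zero] at *
  rw [Real.cot_eq_cos_div_sin, exp_mul_I, exp_mul_I, ← ofReal_cos, ← ofReal_sin,
    ← ofReal_cos, ← ofReal_sin, Real.cos_sub_pi_div_two, Real.sin_sub_pi_div_two,
    Real.cos_two_mul, Real.sin_two_mul]
  push_cast
  have hs : sin (φ : ℂ) ≠ 0 := by rw [← ofReal_sin]; exact_mod_cast hθ
  have hsc : sin (φ : ℂ) + -(cos φ * I) ≠ 0 := fun h =>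
    hθ (by simpa [sin_ofReal_re] using congrArg re h)
  field_simp
  linear_combination (-1 : ℂ) * sin_sq_add_cos_sq (φ : ℂ) - cos (φ : ℂ) ^ 2 * I_sq

lemma partialFractionCoeff_eq {k j : ℕ} (hj : j < k) :
    partialFractionCoeff k j = (1 - Real.cot (negOneRootAngle k j / 2) * I) / k := by
  obtain ⟨h0, h2π⟩ := negOneRootAngle_mem_Ioo hj
  have hsin : Real.sin (negOneRootAngle k j / 2) ≠ 0 :=
    (Real.sin_pos_of_pos_of_lt_pi (by linarith) (by linarith)).ne'
  rw [← neg_two_mul_exp_div_one_sub_exp hsin, partialFractionCoeff, negOneRoot, mul_comm (k : ℂ),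
    ← div_div]

lemma sum_log_norm_one_sub_negOneRoot {k : ℕ} (hk : k ≠ 0) :
    ∑ j ∈ range k, Real.log ‖1 - negOneRoot k j‖ = Real.log 2 := by
  have hone : (1 : ℂ) ^ k + 1 ≠ 0 := by norm_num
  rw [← Real.log_prod fun j hj => norm_ne_zero_iff.2 (sub_negOneRoot_ne_zero hj hone), ← norm_prod,
    prod_sub_negOneRoot hk]
  norm_num

lemma integral_Q_div_one_add_pow_eq_sum_log {k : ℕ} (hk : k ≠ 0) :
    ((∫ t in (0 : ℝ)..1, Q k t / (1 + t ^ k) : ℝ) : ℂ) =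
      ∑ j ∈ range k, partialFractionCoeff k j *
        (log (1 - negOneRoot k j) - log (-negOneRoot k j)) := by
  have hslit : ∀ j ∈ range k, ∀ t ∈ Set.uIcc (0 : ℝ) 1,
      (t : ℂ) - negOneRoot k j ∈ slitPlane := fun j hj t ht =>
    ofReal_sub_mem_slitPlane (neg_negOneRoot_mem_slitPlane (mem_range.1 hj))
      (by rw [Set.uIcc_of_le zero_le_one] at ht; exact ht.1)
  have hpf : ∀ᵐ t ∂MeasureTheory.volume, t ∈ Set.uIoc (0 : ℝ) 1 →
      ((Q k t / (1 + t ^ k) : ℝ) : ℂ) =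
        ∑ j ∈ range k, partialFractionCoeff k j * ((t : ℂ) - negOneRoot k j)⁻¹ := by
    filter_upwards [(Set.countable_singleton (1 : ℝ)).ae_notMem _] with t ht₁ ht
    rw [Set.uIoc_of_le zero_le_one] at ht
    have hne : (t : ℂ) ^ k + 1 ≠ 0 := by exact_mod_cast (add_pos (pow_pos ht.1 k) one_pos).ne'
    simp_rw [← div_eq_mul_inv]
    rw [sum_partialFractionCoeff_div_sub hk (by exact_mod_cast ht₁) hne, Q]
    push_cast
    rfl
  rw [← intervalIntegral.integral_ofReal, integral_congr_ae hpf, integral_finsetSum]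
  · refine sum_congr rfl fun j hj => ?_
    rw [integral_const_mul, integral_inv_ofReal_sub (hslit j hj), ofReal_one, ofReal_zero, zero_sub]
  · exact fun j hj => (intervalIntegrable_inv_ofReal_sub fun t ht =>
      slitPlane_ne_zero (hslit j hj t ht)).const_mul _

lemma re_partialFractionCoeff_mul_log {k j : ℕ} (hj : j < k) :
    (partialFractionCoeff k j * (log (1 - negOneRoot k j) - log (-negOneRoot k j))).re =
      (Real.log ‖1 - negOneRoot k j‖ +
        Real.cot (negOneRootAngle k j / 2) * (π / 2 - negOneRootAngle k j / 2)) / k := by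
  rw [partialFractionCoeff_eq hj]
  have hnorm : ‖-negOneRoot k j‖ = 1 := by rw [norm_neg, negOneRoot, norm_exp_ofReal_mul_I]
  simp only [mul_re, sub_re, sub_im, log_re, log_im, arg_one_sub_negOneRoot hj,
    arg_neg_negOneRoot hj, hnorm, Real.log_one, div_natCast_re, div_natCast_im, one_re, one_im,
    mul_im, ofReal_re, ofReal_im, I_re, I_im]
  ring

/-- For `k ≥ 2`,
`∫₀¹ Q_k(t)/(1+t^k) dt = (log 2)/k − (π/(2k²))·Σ_{j=0}^{k−1} (2j+1−k)·cot((2j+1)π/(2k))`. -/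
theorem stmt_11 (k : ℕ) (hk : 2 ≤ k) :
    ∫ t in (0:ℝ)..1, Q k t / (1 + t ^ k) =
      Real.log 2 / k
        - Real.pi / (2 * (k : ℝ) ^ 2) * ∑ j ∈ Finset.range k,
            (2 * (j : ℝ) + 1 - k) * Real.cot ((2 * (j : ℝ) + 1) * Real.pi / (2 * k)) := by
  have hk₀ : k ≠ 0 := by omega
  have hterm : ∀ j ∈ range k,
      (partialFractionCoeff k j * (log (1 - negOneRoot k j) - log (-negOneRoot k j))).re =
        Real.log ‖1 - negOneRoot k j‖ / k - π / (2 * (k : ℝ) ^ 2) *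
          ((2 * (j : ℝ) + 1 - k) * Real.cot ((2 * (j : ℝ) + 1) * π / (2 * k))) := by
    intro j hj
    rw [re_partialFractionCoeff_mul_log (mem_range.1 hj), negOneRootAngle, div_div,
      mul_comm (k : ℝ) 2]
    field_simp
    ring
  rw [← ofReal_re (∫ t in (0:ℝ)..1, Q k t / (1 + t ^ k)), integral_Q_div_one_add_pow_eq_sum_log hk₀, re_sum,
    sum_congr rfl hterm, sum_sub_distrib, ← sum_div, sum_log_norm_one_sub_negOneRoot hk₀, ← mul_sum]
end

section
/- For every integer k ≥ 1, the series Σ_{n=1}^∞ (−1)^{n−1}·H_{kn}/n converges and its sum equals −∫₀¹ (k·y^{k−1}/(1+y^k))·log(1−y) dy. -/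
open Filter Topology intervalIntegral

/-!
Since `H N = ∫₀¹ (1 - t^N)/(1 - t) dt`, the `m`-th partial sum is `∫₀¹ P_m`, where
`P_m t = Σ_{n<m} (-1)^n (1 - t^{k(n+1)}) / ((n+1)(1-t))`. For fixed `t < 1` this is an alternating
series with decreasing terms and sum `g t = (log 2 - log (1 + t^k))/(1 - t)`, so `|P_m - g|` is
bounded by the next term, whose integral `H_{k(m+1)}/(m+1)` tends to `0`. Finally
`(log 2 - log (1 + t^k)) · (-log (1 - t))` is a primitive of `g` plus the stated integrand, and it
vanishes at both ends because `log 2 - log (1 + t^k) ≤ k (1 - t)`.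
-/

open Finset Real

lemma H_eq_harmonic (n : ℕ) : H n = harmonic n := by
  simp [H, harmonic, one_div]

lemma H_nonneg (n : ℕ) : 0 ≤ H n :=
  sum_nonneg fun j _ => by positivity

lemma integral_geom_sum_eq_H (N : ℕ) : ∫ t in (0 : ℝ)..1, ∑ j ∈ range N, t ^ j = H N := by
  rw [integral_finsetSum fun j _ => (continuous_pow j).intervalIntegrable 0 1]
  refine sum_congr rfl fun j _ => ?_
  simp [integral_pow]

lemma tendsto_H_mul_div_succ {k : ℕ} (hk : k ≠ 0) :
    Tendsto (fun m : ℕ => H (k * (m + 1)) / ((m : ℝ) + 1)) atTop (𝓝 0) := by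
  have hlog : Tendsto (fun x : ℝ => (1 + log k) * x⁻¹ + log x / x) atTop (𝓝 0) := by
    simpa using (tendsto_inv_atTop_zero.const_mul (1 + log k)).add
      (by simpa using tendsto_pow_log_div_mul_add_atTop 1 0 1 one_ne_zero)
  have hsucc : Tendsto (fun m : ℕ => (m : ℝ) + 1) atTop atTop :=
    tendsto_natCast_atTop_atTop.atTop_add tendsto_const_nhds
  refine squeeze_zero (fun m => div_nonneg (H_nonneg _) (by positivity)) (fun m => ?_)
    (hlog.comp hsucc)
  have hm : (0 : ℝ) < m + 1 := by positivity
  have hH : H (k * (m + 1)) ≤ 1 + log (k * ((m : ℝ) + 1)) := by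
    rw [H_eq_harmonic]; exact_mod_cast harmonic_le_one_add_log _
  rw [log_mul (by positivity) hm.ne'] at hH
  calc H (k * (m + 1)) / ((m : ℝ) + 1) ≤ (1 + (log k + log ((m : ℝ) + 1))) / (m + 1) := by
        gcongr
    _ = _ := by simp only [Function.comp_apply]; ring

/-- Unlike `alternating_series_error_bound`, this does not require `a` to be summable. -/
theorem Antitone.abs_sum_range_sub_le_of_tendsto {a : ℕ → ℝ} {l : ℝ} (ha : Antitone a)
    (hl : Tendsto (fun n => ∑ i ∈ range n, (-1 : ℝ) ^ i * a i) atTop (𝓝 l)) (m : ℕ) :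
    |∑ i ∈ range m, (-1 : ℝ) ^ i * a i - l| ≤ a m := by
  obtain ⟨j, rfl | rfl⟩ := Nat.even_or_odd' m
  · have h1 := ha.alternating_series_le_tendsto hl j
    have h2 := ha.tendsto_le_alternating_series hl j
    rw [sum_range_succ, (even_two_mul j).neg_one_pow] at h2
    rw [abs_le]; constructor <;> linarith
  · have h1 := ha.tendsto_le_alternating_series hl j
    have h2 := ha.alternating_series_le_tendsto hl (j + 1)
    rw [show 2 * (j + 1) = 2 * j + 1 + 1 by ring, sum_range_succ,
      (odd_two_mul_add_one j).neg_one_pow] at h2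
    rw [abs_le]; constructor <;> linarith

lemma sum_range_two_mul_alternating_harmonic (m : ℕ) :
    ∑ i ∈ range (2 * m), (-1 : ℝ) ^ i * (1 / ((i : ℝ) + 1)) = H (2 * m) - H m := by
  induction m with
  | zero => simp [H]
  | succ m ih =>
    rw [show 2 * (m + 1) = 2 * m + 1 + 1 by ring, sum_range_succ, sum_range_succ, ih,
      (even_two_mul m).neg_one_pow, (odd_two_mul_add_one m).neg_one_pow]
    simp only [H, sum_range_succ]
    push_cast
    field_simp
    ring

lemma tendsto_alternating_harmonic :
    Tendsto (fun m => ∑ i ∈ range m, (-1 : ℝ) ^ i * (1 / ((i : ℝ) + 1))) atTop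
      (𝓝 (log 2)) := by
  have hanti : Antitone fun i : ℕ => 1 / ((i : ℝ) + 1) := fun i j hij => by simp only; gcongr
  obtain ⟨l, hl⟩ :=
    hanti.tendsto_alternating_series_of_tendsto_zero tendsto_one_div_add_atTop_nhds_zero_nat
  have h2 : Tendsto (fun m : ℕ => 2 * m) atTop atTop :=
    tendsto_atTop_mono (fun m => Nat.le_mul_of_pos_left m two_pos) tendsto_id
  -- `H n - log n` converges (to `γ`), so `H (2m) - H m - log 2 → γ - γ`
  have hγ := tendsto_harmonic_sub_log
  have hlog2 : Tendsto (fun m : ℕ => H (2 * m) - H m) atTop (𝓝 (log 2)) := by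
    have := ((hγ.comp h2).sub hγ).add_const (log 2)
    rw [sub_self, zero_add] at this
    refine this.congr' ?_
    filter_upwards [eventually_ne_atTop 0] with m hm
    simp [H_eq_harmonic, log_mul two_ne_zero (Nat.cast_ne_zero.mpr hm)]
    ring
  have hl2 := (hl.comp h2).congr fun m => sum_range_two_mul_alternating_harmonic m
  rwa [tendsto_nhds_unique hl2 hlog2] at hl

lemma tendsto_sum_alternating_one_sub_pow_div {x : ℝ} (hx : |x| < 1) :
    Tendsto (fun m => ∑ n ∈ range m, (-1 : ℝ) ^ n * ((1 - x ^ (n + 1)) / ((n : ℝ) + 1)))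
      atTop (𝓝 (log 2 - log (1 + x))) := by
  have hlog : HasSum (fun n : ℕ => (-1 : ℝ) ^ n * (x ^ (n + 1) / (n + 1))) (log (1 + x)) := by
    have := (hasSum_pow_div_log_of_abs_lt_one (x := -x) (by rwa [abs_neg])).neg
    rw [neg_neg, sub_neg_eq_add] at this
    exact this.congr_fun fun n => by rw [neg_pow, pow_succ]; ring
  refine (tendsto_alternating_harmonic.sub hlog.tendsto_sum_nat).congr fun m => ?_
  rw [← sum_sub_distrib]
  exact sum_congr rfl fun n _ => by ring

lemma Antitone.sum_range_succ_div {f : ℕ → ℝ} (hf : Antitone f) :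
    Antitone fun n : ℕ => (∑ i ∈ range (n + 1), f i) / ((n : ℝ) + 1) := by
  refine antitone_nat_of_succ_le fun n => ?_
  have hle : ((n : ℝ) + 1) * f (n + 1) ≤ ∑ i ∈ range (n + 1), f i := by
    simpa using card_nsmul_le_sum (range (n + 1)) f (f (n + 1))
      fun i hi => hf (by simp at hi; omega)
  rw [div_le_div_iff₀ (by positivity) (by positivity), sum_range_succ]
  push_cast
  linarith

lemma antitone_one_sub_pow_succ_div {x : ℝ} (hx0 : 0 ≤ x) (hx1 : x ≤ 1) :
    Antitone fun n : ℕ => (1 - x ^ (n + 1)) / ((n : ℝ) + 1) := by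
  intro i j hij
  simp only [← mul_neg_geom_sum, mul_div_assoc]
  exact mul_le_mul_of_nonneg_left ((pow_right_anti₀ hx0 hx1).sum_range_succ_div hij)
    (by linarith)

noncomputable def termIntegrand (k n : ℕ) (t : ℝ) : ℝ :=
  (∑ j ∈ range (k * (n + 1)), t ^ j) / ((n : ℝ) + 1)

noncomputable def limitIntegrand (k : ℕ) (t : ℝ) : ℝ :=
  (log 2 - log (1 + t ^ k)) / (1 - t)

lemma continuous_termIntegrand (k n : ℕ) : Continuous (termIntegrand k n) := by
  unfold termIntegrand; fun_prop

lemma integral_termIntegrand (k n : ℕ) :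
    ∫ t in (0 : ℝ)..1, termIntegrand k n t = H (k * (n + 1)) / ((n : ℝ) + 1) := by
  unfold termIntegrand
  rw [intervalIntegral.integral_div, integral_geom_sum_eq_H]

lemma integral_sum_termIntegrand (k m : ℕ) :
    ∫ t in (0 : ℝ)..1, ∑ n ∈ range m, (-1 : ℝ) ^ n * termIntegrand k n t
      = ∑ n ∈ range m, (-1 : ℝ) ^ n * H (k * (n + 1)) / ((n : ℝ) + 1) := by
  rw [integral_finsetSum fun n _ =>
    ((continuous_termIntegrand k n).intervalIntegrable 0 1).const_mul _]
  refine sum_congr rfl fun n _ => ?_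
  rw [integral_const_mul, integral_termIntegrand, mul_div_assoc]

lemma termIntegrand_eq {k : ℕ} {t : ℝ} (ht : t ≠ 1) (n : ℕ) :
    termIntegrand k n t = (1 - (t ^ k) ^ (n + 1)) / ((n : ℝ) + 1) * (1 - t)⁻¹ := by
  have h1 : 1 - t ≠ 0 := sub_ne_zero.2 ht.symm
  have h2 : t - 1 ≠ 0 := sub_ne_zero.2 ht
  rw [termIntegrand, geom_sum_eq ht, ← pow_mul]
  field_simp
  ring

lemma abs_sum_termIntegrand_sub_limitIntegrand_le {k : ℕ} (hk : k ≠ 0) {t : ℝ} (ht0 : 0 ≤ t)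
    (ht1 : t < 1) (m : ℕ) :
    |∑ n ∈ range m, (-1 : ℝ) ^ n * termIntegrand k n t - limitIntegrand k t|
      ≤ termIntegrand k m t := by
  have hx0 : 0 ≤ t ^ k := pow_nonneg ht0 k
  have hx1 : t ^ k < 1 := pow_lt_one₀ ht0 ht1 hk
  simp only [termIntegrand_eq ht1.ne]
  refine Antitone.abs_sum_range_sub_le_of_tendsto
    ((antitone_one_sub_pow_succ_div hx0 hx1.le).mul_const (inv_nonneg.2 (by linarith))) ?_ m
  have := (tendsto_sum_alternating_one_sub_pow_div (abs_lt.2 ⟨by linarith, hx1⟩)).mul_const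
    (1 - t)⁻¹
  simpa only [limitIntegrand, div_eq_mul_inv (_ - _) (1 - t), sum_mul, mul_assoc] using this

lemma log_two_sub_log_one_add_pow_nonneg (k : ℕ) {t : ℝ} (ht0 : 0 ≤ t) (ht1 : t ≤ 1) :
    0 ≤ log 2 - log (1 + t ^ k) :=
  sub_nonneg.2 <| log_le_log (by positivity) (by linarith [pow_le_one₀ (n := k) ht0 ht1])

lemma log_two_sub_log_one_add_pow_le (k : ℕ) {t : ℝ} (ht0 : 0 ≤ t) (ht1 : t ≤ 1) :
    log 2 - log (1 + t ^ k) ≤ k * (1 - t) := by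
  have hx0 : 0 ≤ t ^ k := pow_nonneg ht0 k
  have hpos : 0 < 1 + t ^ k := by positivity
  have hbernoulli : 1 + k * (t - 1) ≤ t ^ k := by
    simpa using one_add_mul_le_pow (a := t - 1) (by linarith) k
  calc log 2 - log (1 + t ^ k) = log (2 / (1 + t ^ k)) := (log_div two_ne_zero hpos.ne').symm
    _ ≤ 2 / (1 + t ^ k) - 1 := log_le_sub_one_of_pos (by positivity)
    _ ≤ 1 - t ^ k := by
      rw [div_sub_one hpos.ne', div_le_iff₀ hpos]
      nlinarith [pow_le_one₀ (n := k) ht0 ht1]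
    _ ≤ k * (1 - t) := by linarith

/-- At `t = 1` the division by zero makes `limitIntegrand k 1 = 0`. -/
lemma limitIntegrand_mem_Icc (k : ℕ) {t : ℝ} (ht : t ∈ Set.Icc (0 : ℝ) 1) :
    limitIntegrand k t ∈ Set.Icc 0 (k : ℝ) := by
  rcases ht.2.lt_or_eq with ht1 | rfl
  · have hpos : 0 < 1 - t := by linarith
    exact ⟨div_nonneg (log_two_sub_log_one_add_pow_nonneg k ht.1 ht.2) hpos.le,
      (div_le_iff₀ hpos).2 (log_two_sub_log_one_add_pow_le k ht.1 ht.2)⟩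
  · simp [limitIntegrand]

lemma intervalIntegrable_limitIntegrand (k : ℕ) :
    IntervalIntegrable (limitIntegrand k) MeasureTheory.volume 0 1 := by
  rw [intervalIntegrable_iff_integrableOn_Icc_of_le zero_le_one]
  refine MeasureTheory.Measure.integrableOn_of_bounded (M := k) measure_Icc_lt_top.ne
    (by unfold limitIntegrand; exact Measurable.aestronglyMeasurable (by fun_prop)) ?_
  filter_upwards [MeasureTheory.ae_restrict_mem measurableSet_Icc] with t ht
  obtain ⟨h0, hle⟩ := limitIntegrand_mem_Icc k ht
  rwa [norm_of_nonneg h0]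

lemma intervalIntegrable_log_one_sub_mul (k : ℕ) :
    IntervalIntegrable (fun y : ℝ => (k * y ^ (k - 1) / (1 + y ^ k)) * log (1 - y))
      MeasureTheory.volume 0 1 := by
  have hlog : IntervalIntegrable (fun y => log (1 - y)) MeasureTheory.volume 0 1 := by
    simpa using (intervalIntegrable_log' (a := 1) (b := 0)).comp_sub_left 1
  refine hlog.continuousOn_mul fun y hy => ?_
  rw [Set.uIcc_of_le zero_le_one] at hy
  have : 0 ≤ y ^ k := pow_nonneg hy.1 k
  exact ContinuousAt.continuousWithinAt (by fun_prop (disch := positivity))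

noncomputable def logProduct (k : ℕ) (t : ℝ) : ℝ :=
  (log 2 - log (1 + t ^ k)) * -log (1 - t)

lemma hasDerivAt_logProduct {k : ℕ} {x : ℝ} (hx0 : 0 ≤ x) (hx1 : x < 1) :
    HasDerivAt (logProduct k)
      (limitIntegrand k x + (k * x ^ (k - 1) / (1 + x ^ k)) * log (1 - x)) x := by
  have hu : HasDerivAt (fun t => log 2 - log (1 + t ^ k)) (-(k * x ^ (k - 1) / (1 + x ^ k))) x :=
    (((hasDerivAt_pow k x).const_add 1).log (by positivity)).const_sub _
  have hv : HasDerivAt (fun t => -log (1 - t)) (-(-1 / (1 - x))) x :=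
    (((hasDerivAt_id' x).const_sub 1).log (sub_ne_zero.2 hx1.ne')).neg
  refine (hu.mul hv).congr_deriv ?_
  rw [limitIntegrand]
  ring

lemma continuousOn_logProduct (k : ℕ) : ContinuousOn (logProduct k) (Set.Icc 0 1) := by
  intro x hx
  unfold logProduct
  rcases hx.2.lt_or_eq with hx1 | rfl
  · have : 0 ≤ x ^ k := pow_nonneg hx.1 k
    have : 1 - x ≠ 0 := by linarith
    exact ContinuousAt.continuousWithinAt (by fun_prop (disch := positivity))
  · have hbound : Tendsto (fun t : ℝ => -(k * ((1 - t) * log (1 - t)))) (𝓝[Set.Icc 0 1] 1)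
        (𝓝 0) := by
      have : Continuous fun t : ℝ => -(k * ((1 - t) * log (1 - t))) :=
        (continuous_mul_log.comp (continuous_const.sub continuous_id)).const_mul _ |>.neg
      simpa using (this.tendsto 1).mono_left nhdsWithin_le_nhds
    rw [ContinuousWithinAt]
    -- the value at `1` is `0` because `log 0 = 0`
    simp only [sub_self, log_zero, neg_zero, mul_zero]
    refine squeeze_zero' ?_ ?_ hbound
    all_goals filter_upwards [self_mem_nhdsWithin] with t ht
    all_goals have hlog : 0 ≤ -log (1 - t) :=
      neg_nonneg.2 (log_nonpos (by linarith [ht.2]) (by linarith [ht.1]))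
    · exact mul_nonneg (log_two_sub_log_one_add_pow_nonneg k ht.1 ht.2) hlog
    · calc _ ≤ k * (1 - t) * -log (1 - t) :=
            mul_le_mul_of_nonneg_right (log_two_sub_log_one_add_pow_le k ht.1 ht.2) hlog
        _ = _ := by ring

lemma integral_limitIntegrand (k : ℕ) :
    ∫ t in (0 : ℝ)..1, limitIntegrand k t
      = -∫ y in (0 : ℝ)..1, (k * y ^ (k - 1) / (1 + y ^ k)) * log (1 - y) := by
  have hftc := integral_eq_sub_of_hasDerivAt_of_le zero_le_one (continuousOn_logProduct k)
    (fun x hx => hasDerivAt_logProduct hx.1.le hx.2)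
    ((intervalIntegrable_limitIntegrand k).add (intervalIntegrable_log_one_sub_mul k))
  rw [integral_add (intervalIntegrable_limitIntegrand k) (intervalIntegrable_log_one_sub_mul k)]
    at hftc
  norm_num [logProduct] at hftc
  linarith

/-- For `k ≥ 1`, the series `Σ_{n=1}^∞ (−1)^{n−1} H_{kn}/n` converges, with sum
`−∫₀¹ (k·y^{k−1}/(1+y^k))·log(1−y) dy`. -/
theorem stmt_13 (k : ℕ) (hk : 1 ≤ k) :
    Tendsto (fun m => ∑ n ∈ Finset.range m,
        (-1 : ℝ) ^ n * H (k * (n + 1)) / (n + 1))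
      atTop
      (𝓝 (-∫ y in (0:ℝ)..1, (k * y ^ (k - 1) / (1 + y ^ k)) * Real.log (1 - y))) := by
  have hk0 : k ≠ 0 := Nat.one_le_iff_ne_zero.mp hk
  rw [← integral_limitIntegrand, tendsto_iff_norm_sub_tendsto_zero]
  refine squeeze_zero (fun _ => norm_nonneg _) (fun m => ?_) (tendsto_H_mul_div_succ hk0)
  have hsum : Continuous fun t => ∑ n ∈ range m, (-1 : ℝ) ^ n * termIntegrand k n t :=
    continuous_finsetSum _ fun n _ => continuous_const.mul (continuous_termIntegrand k n)
  rw [← integral_sum_termIntegrand, ← integral_termIntegrand,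
    ← integral_sub (hsum.intervalIntegrable 0 1) (intervalIntegrable_limitIntegrand k)]
  refine norm_integral_le_of_norm_le zero_le_one ?_
    ((continuous_termIntegrand k m).intervalIntegrable 0 1)
  filter_upwards [MeasureTheory.volume.ae_ne 1] with t ht1 ht
  exact abs_sum_termIntegrand_sub_limitIntegrand_le hk0 ht.1.le (ht.2.lt_of_ne ht1) m
end

section
/- One has ∫₀¹ t·log(1−t)/(1+t²) dt = −5π²/96 + (1/8)·log² 2. -/
open intervalIntegral

/-!
Since `-log (1 - t) = ∫₀¹ t / (1 - t v) dv`, the integral `I` equals `-∫∫ K` over the unit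
square, where `K t v = t² / ((1 - t v)(1 + t²))`. Integrating `K` in `t` first (partial fractions
in `t`) and then splitting `1 / (v (1 + v²)) = 1 / v - v / (1 + v²)` gives
`∫∫ K = π²/6 + I - (log 2)²/4 - π²/16`, where `π²/6 = -∫₀¹ log (1 - v) / v` comes from the
power series of `log (1 - v)`. Hence `-I = π²/6 + I - (log 2)²/4 - π²/16`.
-/

open MeasureTheory Real Set Function

lemma ae_mem_Ioo_restrict_Ioc (a b : ℝ) :
    ∀ᵐ x ∂volume.restrict (Ioc a b), x ∈ Ioo a b := by
  rw [← restrict_Ioo_eq_restrict_Ioc]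
  exact ae_restrict_mem measurableSet_Ioo

theorem intervalIntegral_integral_swap_of_nonneg {f : ℝ → ℝ → ℝ} {a b c d : ℝ}
    (hab : a ≤ b) (hcd : c ≤ d) (hf : Measurable (uncurry f))
    (hf0 : ∀ x ∈ Ioo a b, ∀ y ∈ Ioo c d, 0 ≤ f x y)
    (hslice : ∀ x ∈ Ioo a b, IntervalIntegrable (f x) volume c d)
    (hint : IntervalIntegrable (fun x => ∫ y in c..d, f x y) volume a b) :
    ∫ x in a..b, ∫ y in c..d, f x y = ∫ y in c..d, ∫ x in a..b, f x y := by
  simp only [integral_of_le hab, integral_of_le hcd]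
  refine integral_integral_swap ((integrable_prod_iff hf.aestronglyMeasurable).2 ⟨?_, ?_⟩)
  · filter_upwards [ae_mem_Ioo_restrict_Ioc a b] with x hx
    exact (hslice x hx).1
  · refine ((intervalIntegrable_iff_integrableOn_Ioc_of_le hab).1 hint).congr ?_
    filter_upwards [ae_mem_Ioo_restrict_Ioc a b] with x hx
    rw [integral_of_le hcd]
    refine integral_congr_ae ?_
    filter_upwards [ae_mem_Ioo_restrict_Ioc c d] with y hy
    exact (Real.norm_of_nonneg (hf0 x hx y hy)).symm

lemma hasSum_pow_div_succ {v : ℝ} (hv : |v| < 1) (hv0 : v ≠ 0) :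
    HasSum (fun n : ℕ => v ^ n / (n + 1)) (-log (1 - v) / v) := by
  have h := (hasSum_pow_div_log_of_abs_lt_one hv).div_const v
  simp_rw [pow_succ, div_right_comm _ _ v, mul_div_cancel_right₀ _ hv0] at h
  exact h

lemma hasSum_one_div_succ_sq : HasSum (fun n : ℕ => 1 / ((n : ℝ) + 1) ^ 2) (π ^ 2 / 6) := by
  simpa using (hasSum_nat_add_iff' 1).2 hasSum_zeta_two

lemma integral_log_one_sub_div : ∫ v in (0:ℝ)..1, log (1 - v) / v = -(π ^ 2 / 6) := by
  have hterm (n : ℕ) : ∫ v in (0:ℝ)..1, v ^ n / (n + 1) = 1 / ((n : ℝ) + 1) ^ 2 := by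
    rw [intervalIntegral.integral_div, integral_pow]
    field_simp
    ring
  have hsum : HasSum (fun n : ℕ => ∫ v in (0:ℝ)..1, v ^ n / (n + 1))
      (∫ v in (0:ℝ)..1, -log (1 - v) / v) := by
    rw [integral_congr_Ioo_of_le zero_le_one fun v hv =>
      (hasSum_pow_div_succ (abs_lt.2 ⟨by linarith [hv.1], hv.2⟩) hv.1.ne').tsum_eq.symm]
    simp only [integral_of_le zero_le_one]
    refine hasSum_integral_of_summable_integral_norm (fun n => ?_) ?_
    · exact (continuous_pow n).div_const _ |>.integrableOn_Ioc
    · refine hasSum_one_div_succ_sq.summable.congr fun n => ?_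
      rw [← hterm, integral_of_le zero_le_one]
      exact setIntegral_congr_fun measurableSet_Ioc fun v hv =>
        (Real.norm_of_nonneg (div_nonneg (pow_nonneg hv.1.le n) n.cast_add_one_pos.le)).symm
  have := hsum.unique (by simpa only [hterm] using hasSum_one_div_succ_sq)
  simp only [neg_div, intervalIntegral.integral_neg] at this
  linarith

lemma one_sub_mul_pos {t v : ℝ} (ht : t < 1) (hv0 : 0 ≤ v) (hv1 : v ≤ 1) : 0 < 1 - t * v := by
  rcases hv0.eq_or_lt with rfl | hv
  · simp
  nlinarith [mul_lt_mul_of_pos_right ht hv]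

lemma intervalIntegrable_log_one_sub (a b : ℝ) :
    IntervalIntegrable (fun x => log (1 - x)) volume a b := by
  simpa using (intervalIntegrable_log' (a := 1 - a) (b := 1 - b)).comp_sub_left 1

lemma intervalIntegrable_mul_log_one_sub_div (a b : ℝ) :
    IntervalIntegrable (fun t => t * log (1 - t) / (1 + t ^ 2)) volume a b := by
  have hcont : Continuous fun t : ℝ => t / (1 + t ^ 2) := by
    fun_prop (disch := intro; positivity)
  have h := (intervalIntegrable_log_one_sub a b).continuousOn_mul hcont.continuousOn
  convert h using 2 with t
  ring

lemma integral_div_one_sub_mul {t : ℝ} (ht : t < 1) :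
    ∫ v in (0:ℝ)..1, t / (1 - t * v) = -log (1 - t) := by
  have hpos : ∀ v ∈ uIcc (0:ℝ) 1, 0 < 1 - t * v := fun v hv => by
    rw [uIcc_of_le zero_le_one] at hv
    exact one_sub_mul_pos ht hv.1 hv.2
  have hderiv : ∀ v ∈ uIcc (0:ℝ) 1,
      HasDerivAt (fun v => -log (1 - t * v)) (t / (1 - t * v)) v := fun v hv =>
    ((((hasDerivAt_id v).const_mul t).const_sub 1).log (hpos v hv).ne').neg.congr_deriv
      (by simp [neg_div])
  rw [integral_eq_sub_of_hasDerivAt hderiv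
    (continuousOn_const.div (by fun_prop) fun v hv => (hpos v hv).ne').intervalIntegrable]
  simp

lemma integral_div_one_add_sq (a b : ℝ) :
    ∫ x in a..b, x / (1 + x ^ 2) = (log (1 + b ^ 2) - log (1 + a ^ 2)) / 2 := by
  have hderiv : ∀ x ∈ uIcc a b, HasDerivAt (fun x => log (1 + x ^ 2) / 2) (x / (1 + x ^ 2)) x :=
    fun x _ => ((((hasDerivAt_pow 2 x).const_add 1).log (by positivity)).div_const 2).congr_deriv
      (by field_simp; ring)
  have hcont : Continuous fun x : ℝ => x / (1 + x ^ 2) := by fun_prop (disch := intro; positivity)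
  rw [integral_eq_sub_of_hasDerivAt hderiv (hcont.intervalIntegrable a b)]
  ring

noncomputable def logKernel (t v : ℝ) : ℝ := t ^ 2 / ((1 - t * v) * (1 + t ^ 2))

lemma measurable_logKernel : Measurable (uncurry logKernel) := by
  unfold logKernel
  fun_prop

lemma logKernel_nonneg {t v : ℝ} (ht : t < 1) (hv0 : 0 ≤ v) (hv1 : v ≤ 1) :
    0 ≤ logKernel t v :=
  div_nonneg (sq_nonneg t) (mul_pos (one_sub_mul_pos ht hv0 hv1) (by positivity)).le

lemma integral_logKernel_right {t : ℝ} (ht : t < 1) :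
    ∫ v in (0:ℝ)..1, logKernel t v = -(t * log (1 - t) / (1 + t ^ 2)) := by
  have h : ∀ v, logKernel t v = t / (1 + t ^ 2) * (t / (1 - t * v)) := fun v => by
    rw [logKernel, div_mul_div_comm, ← sq, mul_comm (1 + t ^ 2)]
  simp_rw [h]
  rw [intervalIntegral.integral_const_mul, integral_div_one_sub_mul ht]
  ring

lemma continuousOn_logKernel_right {t : ℝ} (ht : t < 1) :
    ContinuousOn (logKernel t) (uIcc 0 1) := by
  refine continuousOn_const.div (by fun_prop) fun v hv => ?_
  rw [uIcc_of_le zero_le_one] at hv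
  have := one_sub_mul_pos ht hv.1 hv.2
  positivity

lemma continuousOn_logKernel_left {v : ℝ} (hv : v < 1) :
    ContinuousOn (fun t => logKernel t v) (uIcc 0 1) := by
  refine (continuousOn_pow 2).div (by fun_prop) fun t ht => ?_
  rw [uIcc_of_le zero_le_one] at ht
  have := one_sub_mul_pos hv ht.1 ht.2
  rw [mul_comm t v]
  positivity

lemma integral_logKernel_left {v : ℝ} (hv0 : v ≠ 0) (hv1 : v < 1) :
    ∫ t in (0:ℝ)..1, logKernel t v =
      (-log (1 - v) / v - log 2 / 2 * v - π / 4) / (1 + v ^ 2) := by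
  have hderiv : ∀ t ∈ uIcc (0:ℝ) 1, HasDerivAt
      (fun t => (-log (1 - v * t) / v - v / 2 * log (1 + t ^ 2) - arctan t) / (1 + v ^ 2))
      (logKernel t v) t := fun t ht => by
    rw [uIcc_of_le zero_le_one] at ht
    have hpos : 1 - v * t ≠ 0 := (one_sub_mul_pos hv1 ht.1 ht.2).ne'
    have h1 := ((((hasDerivAt_id t).const_mul v).const_sub 1).log hpos).neg.div_const v
    have h2 := ((((hasDerivAt_pow 2 t).const_add 1).log (by positivity)).const_mul (v / 2))
    refine (((h1.sub h2).sub (hasDerivAt_arctan t)).div_const (1 + v ^ 2)).congr_deriv ?_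
    simp only [logKernel, id]
    norm_num
    field_simp
    ring
  rw [integral_eq_sub_of_hasDerivAt hderiv (continuousOn_logKernel_left hv1).intervalIntegrable]
  norm_num [arctan_one]
  ring

lemma intervalIntegrable_integral_logKernel_right :
    IntervalIntegrable (fun t => ∫ v in (0:ℝ)..1, logKernel t v) volume 0 1 :=
  (intervalIntegrable_mul_log_one_sub_div 0 1).neg.congr_uIoo fun t ht => by
    rw [uIoo_of_le zero_le_one] at ht
    exact (integral_logKernel_right ht.2).symm

lemma integral_integral_logKernel_right :
    ∫ t in (0:ℝ)..1, ∫ v in (0:ℝ)..1, logKernel t v =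
      -∫ t in (0:ℝ)..1, t * log (1 - t) / (1 + t ^ 2) := by
  rw [integral_congr_Ioo_of_le zero_le_one fun t ht => integral_logKernel_right ht.2,
    intervalIntegral.integral_neg]

lemma integral_integral_logKernel_left :
    ∫ v in (0:ℝ)..1, ∫ t in (0:ℝ)..1, logKernel t v =
      π ^ 2 / 6 + (∫ v in (0:ℝ)..1, v * log (1 - v) / (1 + v ^ 2)) - log 2 ^ 2 / 4 -
        π ^ 2 / 16 := by
  have h1 : IntervalIntegrable (fun v => -(log (1 - v) / v)) volume 0 1 :=
    (intervalIntegrable_of_integral_ne_zero <| by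
      rw [integral_log_one_sub_div]; simp [pi_ne_zero]).neg
  have h2 := intervalIntegrable_mul_log_one_sub_div 0 1
  have h3 : IntervalIntegrable (fun v => log 2 / 2 * (v / (1 + v ^ 2))) volume 0 1 :=
    (by fun_prop (disch := intro; positivity) : Continuous _).intervalIntegrable 0 1
  have h4 : IntervalIntegrable (fun v => π / 4 * (1 / (1 + v ^ 2))) volume 0 1 :=
    (by fun_prop (disch := intro; positivity) : Continuous _).intervalIntegrable 0 1
  rw [integral_congr_Ioo_of_le zero_le_one (g := fun v => -(log (1 - v) / v) +
      v * log (1 - v) / (1 + v ^ 2) - log 2 / 2 * (v / (1 + v ^ 2)) - π / 4 * (1 / (1 + v ^ 2)))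
      fun v hv => by rw [integral_logKernel_left hv.1.ne' hv.2]; field_simp [hv.1.ne']; ring]
  rw [intervalIntegral.integral_sub ((h1.add h2).sub h3) h4,
    intervalIntegral.integral_sub (h1.add h2) h3, intervalIntegral.integral_add h1 h2,
    intervalIntegral.integral_neg, intervalIntegral.integral_const_mul,
    intervalIntegral.integral_const_mul, integral_log_one_sub_div, integral_one_div_one_add_sq,
    integral_div_one_add_sq]
  norm_num [arctan_one]
  ring

/-- `∫₀¹ t·log(1−t)/(1+t²) dt = −5π²/96 + (1/8)·log² 2`. -/
theorem stmt_15 :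
    ∫ t in (0:ℝ)..1, t * Real.log (1 - t) / (1 + t ^ 2) =
      -(5 * Real.pi ^ 2) / 96 + (1 / 8) * Real.log 2 ^ 2 := by
  have hswap := intervalIntegral_integral_swap_of_nonneg zero_le_one zero_le_one
    measurable_logKernel (fun t ht v hv => logKernel_nonneg ht.2 hv.1.le hv.2.le)
    (fun t ht => (continuousOn_logKernel_right ht.2).intervalIntegrable)
    intervalIntegrable_integral_logKernel_right
  rw [integral_integral_logKernel_right, integral_integral_logKernel_left] at hswap
  linarith
end

section
/- One has ∫₀¹ (1−2t)·log(1−t)/(1−t+t²) dt = π²/18. -/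
/-!
Substituting `t ↦ 1 - t` and integrating by parts against
`d/du log (1 - u + u²) = (2u - 1) / (1 - u + u²)` turns the integral into
`-∫₀¹ log (1 - u + u²) / u du`; the boundary term vanishes because `log (1 - u + u²) = O(u)`
at `0`. Since `1 - u + u² = (1 + u³) / (1 + u)`, this is
`∫₀¹ log (1 + u) / u du - ∫₀¹ log (1 + u³) / u du`, and `∫₀¹ log (1 + u^m) / u du = π² / (12 m)`
follows by integrating `log (1 + x) = ∑ (x^(n+1) - x^(2(n+1))) / (n + 1)` termwise (the terms
are nonnegative on `[0, 1)`) and using `ζ(2) = π² / 6`.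
-/

open intervalIntegral Real MeasureTheory Set

theorem ContinuousOn.dslope {𝕜 E : Type*} [NontriviallyNormedField 𝕜]
    [NormedAddCommGroup E] [NormedSpace 𝕜 E] {f : 𝕜 → E} {a : 𝕜} {s : Set 𝕜}
    (hc : ContinuousOn f s) (hd : DifferentiableAt 𝕜 f a) : ContinuousOn (dslope f a) s := by
  intro x hx
  rcases eq_or_ne x a with rfl | hne
  · exact (continuousAt_dslope_same.2 hd).continuousWithinAt
  · exact (continuousWithinAt_dslope_of_ne hne).2 (hc x hx)

section VanishingAtZero

/-! For `q 0 = 0`, `dslope q 0` is the continuous extension of `q u / u` across `0`. -/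

variable {q : ℝ → ℝ}

theorem mul_dslope_zero_of_map_zero (h0 : q 0 = 0) (u : ℝ) : u * dslope q 0 u = q u := by
  simpa [h0] using sub_smul_dslope q 0 u

theorem intervalIntegrable_div_self_of_map_zero {a b : ℝ} (hc : ContinuousOn q (uIcc a b))
    (hd : DifferentiableAt ℝ q 0) (h0 : q 0 = 0) :
    IntervalIntegrable (fun u => q u / u) volume a b := by
  refine (hc.dslope hd).intervalIntegrable.congr_ae (ae_restrict_of_ae ?_)
  filter_upwards [compl_mem_ae_iff.2 (measure_singleton (μ := volume) (0 : ℝ))] with u hu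
  rw [← mul_dslope_zero_of_map_zero h0 u, mul_div_cancel_left₀ _ hu]

theorem continuousOn_mul_log_of_map_zero {s : Set ℝ} (hc : ContinuousOn q s)
    (hd : DifferentiableAt ℝ q 0) (h0 : q 0 = 0) : ContinuousOn (fun u => q u * log u) s := by
  have h : (fun u => q u * log u) = fun u => dslope q 0 u * (u * log u) := by
    funext u
    rw [← mul_dslope_zero_of_map_zero h0 u]
    ring
  rw [h]
  exact (hc.dslope hd).mul continuous_mul_log.continuousOn

theorem integral_deriv_mul_log {q' : ℝ → ℝ} (hq : ∀ u, HasDerivAt q (q' u) u)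
    (hq' : Continuous q') (h0 : q 0 = 0) {b : ℝ} (hb : 0 ≤ b) :
    ∫ u in 0..b, q' u * log u = q b * log b - ∫ u in 0..b, q u / u := by
  have hc : Continuous q := continuous_iff_continuousAt.2 fun u => (hq u).continuousAt
  have hint_log : IntervalIntegrable (fun u => q' u * log u) volume 0 b :=
    intervalIntegrable_log'.continuousOn_mul hq'.continuousOn
  have hint_div : IntervalIntegrable (fun u => q u / u) volume 0 b :=
    intervalIntegrable_div_self_of_map_zero hc.continuousOn (hq 0).differentiableAt h0
  have hderiv : ∀ u ∈ Ioo 0 b, HasDerivAt (fun u => q u * log u) (q' u * log u + q u / u) u :=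
    fun u hu => ((hq u).mul (hasDerivAt_log hu.1.ne')).congr_deriv (by rw [div_eq_mul_inv])
  have hftc := integral_eq_sub_of_hasDerivAt_of_le hb
    (continuousOn_mul_log_of_map_zero hc.continuousOn (hq 0).differentiableAt h0) hderiv
    (hint_log.add hint_div)
  rw [integral_add hint_log hint_div] at hftc
  simp only [h0, zero_mul, sub_zero] at hftc
  linarith

end VanishingAtZero

theorem integral_pow_div_self {k : ℕ} (hk : 0 < k) : ∫ u in (0 : ℝ)..1, u ^ k / u = 1 / k := by
  obtain ⟨j, rfl⟩ := Nat.exists_eq_add_one_of_ne_zero hk.ne'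
  rw [integral_congr_ae (g := fun u => u ^ j) (ae_of_all _ fun u hu => ?_), integral_pow]
  · push_cast
    ring
  · rw [uIoc_of_le zero_le_one] at hu
    rw [pow_succ, mul_div_cancel_right₀ _ hu.1.ne']

theorem MeasureTheory.integral_eq_of_hasSum_of_nonneg {α ι : Type*} [MeasurableSpace α]
    {μ : Measure α} [Countable ι] {F : ι → α → ℝ} {f : α → ℝ} {S : ℝ}
    (hF : ∀ i, Integrable (F i) μ) (hF_nonneg : ∀ i, 0 ≤ᵐ[μ] F i)
    (hf : ∀ᵐ x ∂μ, HasSum (F · x) (f x)) (hS : HasSum (fun i => ∫ x, F i x ∂μ) S) :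
    ∫ x, f x ∂μ = S := by
  have hnorm : (fun i => ∫ x, ‖F i x‖ ∂μ) = fun i => ∫ x, F i x ∂μ := funext fun i =>
    integral_congr_ae <| (hF_nonneg i).mono fun x hx => Real.norm_of_nonneg hx
  rw [integral_congr_ae (hf.mono fun x hx => hx.tsum_eq.symm)]
  exact (hasSum_integral_of_summable_integral_norm hF (hnorm ▸ hS.summable)).unique hS

theorem Real.hasSum_log_one_add_of_abs_lt_one {x : ℝ} (h : |x| < 1) :
    HasSum (fun n : ℕ => (x ^ (n + 1) - x ^ (2 * (n + 1))) / (n + 1)) (log (1 + x)) := by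
  have h2 : |x ^ 2| < 1 := by
    rw [abs_pow, sq_lt_one_iff₀ (abs_nonneg x)]
    exact h
  have hx : 1 - x ≠ 0 := by linarith [le_abs_self x]
  have hx' : 1 + x ≠ 0 := by linarith [neg_abs_le x]
  have hsum := (hasSum_pow_div_log_of_abs_lt_one h).sub (hasSum_pow_div_log_of_abs_lt_one h2)
  rw [show 1 - x ^ 2 = (1 - x) * (1 + x) by ring, log_mul hx hx', neg_sub_neg,
    add_sub_cancel_left] at hsum
  refine hsum.congr_fun fun n => ?_
  rw [pow_mul']
  ring

theorem intervalIntegrable_log_one_add_pow_div_self {m : ℕ} (hm : 0 < m) :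
    IntervalIntegrable (fun u : ℝ => log (1 + u ^ m) / u) volume 0 1 := by
  refine intervalIntegrable_div_self_of_map_zero (ContinuousOn.log (by fun_prop) fun u hu => ?_)
    (by fun_prop (disch := simp [hm.ne'])) (by simp [hm.ne'])
  rw [uIcc_of_le zero_le_one] at hu
  have := pow_nonneg hu.1 m
  positivity

theorem integral_log_one_add_pow_div_self {m : ℕ} (hm : 0 < m) :
    ∫ u in (0 : ℝ)..1, log (1 + u ^ m) / u = π ^ 2 / (12 * m) := by
  set F : ℕ → ℝ → ℝ := fun n u => (u ^ (m * (n + 1)) - u ^ (2 * m * (n + 1))) / (n + 1) / u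
  have hpow_int : ∀ k, 0 < k → IntervalIntegrable (fun u : ℝ => u ^ k / u) volume 0 1 :=
    fun k hk =>
      intervalIntegrable_div_self_of_map_zero (by fun_prop) (by fun_prop) (by simp [hk.ne'])
  have hF_int : ∀ n, IntervalIntegrable (F n) volume 0 1 := fun n =>
    intervalIntegrable_div_self_of_map_zero (by fun_prop) (by fun_prop) (by simp [hm.ne'])
  have hF_integral : ∀ n, ∫ u in (0 : ℝ)..1, F n u = 1 / (2 * m) * (1 / ((n : ℝ) + 1) ^ 2) := by
    intro n
    have ha : 0 < m * (n + 1) := by positivity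
    have hb : 0 < 2 * m * (n + 1) := by positivity
    have hF : F n = fun u : ℝ =>
        (u ^ (m * (n + 1)) / u - u ^ (2 * m * (n + 1)) / u) / ((n : ℝ) + 1) := by
      funext u
      simp only [F]
      ring
    rw [hF, intervalIntegral.integral_div, integral_sub (hpow_int _ ha) (hpow_int _ hb),
      integral_pow_div_self ha, integral_pow_div_self hb]
    push_cast
    field_simp
    ring
  have hF_nonneg : ∀ n, ∀ u ∈ Ioo (0 : ℝ) 1, 0 ≤ F n u := by
    intro n u ⟨hu0, hu1⟩
    have : u ^ (2 * m * (n + 1)) ≤ u ^ (m * (n + 1)) :=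
      pow_le_pow_of_le_one hu0.le hu1.le (by nlinarith)
    have : 0 ≤ u ^ (m * (n + 1)) - u ^ (2 * m * (n + 1)) := by linarith
    simp only [F]
    positivity
  have hF_sum : ∀ u ∈ Ioo (0 : ℝ) 1, HasSum (F · u) (log (1 + u ^ m) / u) := by
    intro u ⟨hu0, hu1⟩
    have hum : |u ^ m| < 1 := by
      rw [abs_of_pos (pow_pos hu0 m)]
      exact pow_lt_one₀ hu0.le hu1 hm.ne'
    refine ((hasSum_log_one_add_of_abs_lt_one hum).div_const u).congr_fun fun n => ?_
    simp only [F, ← pow_mul, mul_assoc, mul_comm m]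
  have hzeta : HasSum (fun n : ℕ => 1 / ((n : ℝ) + 1) ^ 2) (π ^ 2 / 6) := by
    simpa using (hasSum_nat_add_iff' 1).2 hasSum_zeta_two
  rw [integral_of_le zero_le_one, integral_Ioc_eq_integral_Ioo]
  refine integral_eq_of_hasSum_of_nonneg
    (fun n => (intervalIntegrable_iff_integrableOn_Ioo_of_le zero_le_one).1 (hF_int n))
    (fun n => ae_restrict_of_forall_mem measurableSet_Ioo (hF_nonneg n))
    (ae_restrict_of_forall_mem measurableSet_Ioo hF_sum) ?_
  rw [show π ^ 2 / (12 * m) = 1 / (2 * m) * (π ^ 2 / 6) by field_simp; ring]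
  refine (hzeta.mul_left _).congr_fun fun n => ?_
  rw [← hF_integral n, integral_of_le zero_le_one, integral_Ioc_eq_integral_Ioo]

theorem one_sub_add_sq_pos (u : ℝ) : 0 < 1 - u + u ^ 2 := by
  nlinarith [sq_nonneg (2 * u - 1)]

theorem hasDerivAt_log_one_sub_add_sq (u : ℝ) :
    HasDerivAt (fun u => log (1 - u + u ^ 2)) ((2 * u - 1) / (1 - u + u ^ 2)) u :=
  ((((hasDerivAt_id u).const_sub 1).add (hasDerivAt_pow 2 u)).log
    (one_sub_add_sq_pos u).ne').congr_deriv (by norm_num; ring)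

theorem Real.log_one_sub_add_sq {u : ℝ} (hu : -1 < u) :
    log (1 - u + u ^ 2) = log (1 + u ^ 3) - log (1 + u) := by
  have h1 : 0 < 1 + u := by linarith
  rw [eq_sub_iff_add_eq, ← log_mul (one_sub_add_sq_pos u).ne' h1.ne']
  ring_nf

theorem integral_log_one_sub_add_sq_div_self :
    ∫ u in (0 : ℝ)..1, log (1 - u + u ^ 2) / u = -(π ^ 2 / 18) := by
  have hsplit : EqOn (fun u => log (1 - u + u ^ 2) / u)
      (fun u => log (1 + u ^ 3) / u - log (1 + u ^ 1) / u) (uIcc 0 1) := fun u hu => by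
    rw [uIcc_of_le zero_le_one] at hu
    simp only [pow_one, log_one_sub_add_sq (by linarith [hu.1] : (-1 : ℝ) < u), sub_div]
  rw [integral_congr hsplit,
    integral_sub (intervalIntegrable_log_one_add_pow_div_self (by norm_num))
      (intervalIntegrable_log_one_add_pow_div_self one_pos),
    integral_log_one_add_pow_div_self (by norm_num), integral_log_one_add_pow_div_self one_pos]
  push_cast
  ring

/-- `∫₀¹ (1−2t)·log(1−t)/(1−t+t²) dt = π²/18`. -/
theorem stmt_16 :
    ∫ t in (0:ℝ)..1, (1 - 2 * t) * Real.log (1 - t) / (1 - t + t ^ 2) =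
      Real.pi ^ 2 / 18 := by
  have hq' : Continuous fun u : ℝ => (2 * u - 1) / (1 - u + u ^ 2) := by
    fun_prop (disch := exact fun u => (one_sub_add_sq_pos u).ne')
  have hsubst := integral_comp_sub_left (a := 0) (b := 1)
    (fun u : ℝ => (2 * u - 1) / (1 - u + u ^ 2) * log u) 1
  simp only [sub_self, sub_zero] at hsubst
  calc ∫ t in (0:ℝ)..1, (1 - 2 * t) * log (1 - t) / (1 - t + t ^ 2)
      = ∫ u in (0:ℝ)..1, (2 * u - 1) / (1 - u + u ^ 2) * log u := by
        rw [← hsubst]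
        congr 1
        funext t
        ring
    _ = -∫ u in (0:ℝ)..1, log (1 - u + u ^ 2) / u := by
        rw [integral_deriv_mul_log hasDerivAt_log_one_sub_add_sq hq' (by simp) zero_le_one]
        simp
    _ = π ^ 2 / 18 := by
        rw [integral_log_one_sub_add_sq_div_self, neg_neg]
end
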